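/- Let (Ω, F, P) be a probability space, X : Ω → [0, ∞) integrable, and (aₙ) positive reals with aₙ⁻¹ → 0 and ∑ aₙ⁻¹ = ∞. With Aₙ defined inductively by A₁ = {X ≥ a₁⁻¹}, Aₙ = {X ≥ aₙ⁻¹ + ∑_{j<n} a_j⁻¹ 1_{A_j}}, one has E[X] = ∑_{n=1}^∞ aₙ⁻¹ · P(Aₙ), and this series converges (is finite). -/

import Mathlib

/-!
Writing `f n = aₙ⁻¹ 1_{Aₙ}`, the partial sums `∑_{j<n} f j` are the thresholds in the definition
of `Aₙ`, so they never exceed `X`. Were their limit `L` strictly below `X ω`, then `aₙ⁻¹ < X ω - L`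
for large `n` would put `ω` in every late `Aₙ`, and `∑ aₙ⁻¹` would converge. Hence `∑ f n = X`
pointwise, and monotone convergence integrates the series term by term.
-/

open MeasureTheory Filter Topology

noncomputable def partialS (X : Ω → ℝ) (a : ℕ → ℝ) : ℕ → Ω → ℝ
  | 0, _ => 0
  | (n+1), ω => partialS X a n ω + (a n)⁻¹ * (if (a n)⁻¹ + partialS X a n ω ≤ X ω then 1 else 0)

/-- `Aset X a n` is the set `Aₙ₊₁ = {X ≥ aₙ₊₁⁻¹ + ∑_{j<n+1} a_j⁻¹ 1_{A_j}}` (0-indexed). -/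
noncomputable def Aset (X : Ω → ℝ) (a : ℕ → ℝ) (n : ℕ) : Set Ω :=
  {ω | (a n)⁻¹ + partialS X a n ω ≤ X ω}

section

variable {Ω : Type*} {X : Ω → ℝ} {a : ℕ → ℝ}

lemma partialS_succ (X : Ω → ℝ) (a : ℕ → ℝ) (n : ℕ) :
    partialS X a (n + 1) = partialS X a n + (Aset X a n).indicator (fun _ => (a n)⁻¹) := by
  ext ω
  simp only [partialS, Pi.add_apply, Set.indicator_apply, Aset, Set.mem_ofPred_eq]
  split_ifs <;> simp

lemma partialS_eq_sum (X : Ω → ℝ) (a : ℕ → ℝ) (n : ℕ) (ω : Ω) :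
    partialS X a n ω = ∑ j ∈ Finset.range n, (Aset X a j).indicator (fun _ => (a j)⁻¹) ω := by
  induction n with
  | zero => rfl
  | succ n ih => rw [partialS_succ, Pi.add_apply, ih, Finset.sum_range_succ]

lemma partialS_le {ω : Ω} (hX : 0 ≤ X ω) (n : ℕ) : partialS X a n ω ≤ X ω := by
  induction n with
  | zero => exact hX
  | succ n ih =>
    simp only [partialS]
    split_ifs with h <;> linarith

lemma hasSum_indicator_Aset {ω : Ω} (hX : 0 ≤ X ω) (ha : ∀ n, 0 ≤ a n)
    (hvan : Tendsto (fun n => (a n)⁻¹) atTop (𝓝 0)) (hdiv : ¬ Summable (fun n => (a n)⁻¹)) :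
    HasSum (fun n => (Aset X a n).indicator (fun _ => (a n)⁻¹) ω) (X ω) := by
  set f := fun n => (Aset X a n).indicator (fun _ => (a n)⁻¹) ω
  have hf0 : ∀ n, 0 ≤ f n := fun n => Set.indicator_nonneg (fun _ _ => inv_nonneg.2 (ha n)) ω
  have hf : Summable f := summable_of_sum_range_le hf0 fun n =>
    partialS_eq_sum X a n ω ▸ partialS_le hX n
  have hpartial_le : ∀ n, partialS X a n ω ≤ ∑' n, f n := fun n => by
    rw [partialS_eq_sum]
    exact hf.sum_le_tsum _ fun j _ => hf0 j
  suffices ∑' n, f n = X ω by rw [← this]; exact hf.hasSum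
  refine le_antisymm ?_ (not_lt.1 fun hlt => hdiv ?_)
  · exact le_of_tendsto' (by simpa only [f, ← partialS_eq_sum] using hf.hasSum.tendsto_sum_nat)
      (partialS_le hX)
  · refine hf.congr_atTop ?_
    filter_upwards [hvan.eventually_lt_const (sub_pos.2 hlt)] with n hn
    have hmem : ω ∈ Aset X a n := show (a n)⁻¹ + partialS X a n ω ≤ X ω by
      linarith [hpartial_le n]
    exact Set.indicator_of_mem hmem _

section Measure

variable [MeasurableSpace Ω] {μ : Measure Ω}

lemma aemeasurable_partialS (hX : AEMeasurable X μ) (n : ℕ) :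
    AEMeasurable (partialS X a n) μ := by
  induction n with
  | zero => exact aemeasurable_const
  | succ n ih =>
    rw [partialS_succ]
    exact ih.add (aemeasurable_const.indicator₀ (nullMeasurableSet_le (aemeasurable_const.add ih) hX))

lemma nullMeasurableSet_Aset (hX : AEMeasurable X μ) (n : ℕ) : NullMeasurableSet (Aset X a n) μ :=
  nullMeasurableSet_le (aemeasurable_const.add (aemeasurable_partialS hX n)) hX

theorem lintegral_ofReal_eq_tsum_measure_Aset (hX : AEMeasurable X μ) (hX0 : ∀ ω, 0 ≤ X ω)
    (ha : ∀ n, 0 ≤ a n) (hvan : Tendsto (fun n => (a n)⁻¹) atTop (𝓝 0))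
    (hdiv : ¬ Summable (fun n => (a n)⁻¹)) :
    ∫⁻ ω, ENNReal.ofReal (X ω) ∂μ = ∑' n, ENNReal.ofReal (a n)⁻¹ * μ (Aset X a n) := by
  have hseries : ∀ ω, ENNReal.ofReal (X ω)
      = ∑' n, (Aset X a n).indicator (fun _ => ENNReal.ofReal (a n)⁻¹) ω := fun ω => by
    have hsum := hasSum_indicator_Aset (hX0 ω) ha hvan hdiv
    rw [← hsum.tsum_eq, ENNReal.ofReal_tsum_of_nonneg
      (fun n => Set.indicator_nonneg (fun _ _ => inv_nonneg.2 (ha n)) ω) hsum.summable]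
    exact tsum_congr fun n => (congrFun (Set.indicator_comp_of_zero ENNReal.ofReal_zero) ω).symm
  calc ∫⁻ ω, ENNReal.ofReal (X ω) ∂μ
      = ∫⁻ ω, ∑' n, (Aset X a n).indicator (fun _ => ENNReal.ofReal (a n)⁻¹) ω ∂μ :=
        lintegral_congr hseries
    _ = ∑' n, ∫⁻ ω, (Aset X a n).indicator (fun _ => ENNReal.ofReal (a n)⁻¹) ω ∂μ :=
        lintegral_tsum fun n => aemeasurable_const.indicator₀ (nullMeasurableSet_Aset hX n)
    _ = ∑' n, ENNReal.ofReal (a n)⁻¹ * μ (Aset X a n) :=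
        tsum_congr fun n => lintegral_indicator_const₀ (nullMeasurableSet_Aset hX n) _

end Measure

end

theorem stmt5_general {Ω : Type*} [MeasurableSpace Ω] (P : Measure Ω)
    (X : Ω → ℝ) (hX0 : ∀ ω, 0 ≤ X ω) (hint : Integrable X P)
    (a : ℕ → ℝ) (ha : ∀ n, 0 < a n)
    (hvan : Tendsto (fun n => (a n)⁻¹) atTop (𝓝 0))
    (hdiv : ¬ Summable (fun n => (a n)⁻¹)) :
    ENNReal.ofReal (∫ ω, X ω ∂P)
      = ∑' n : ℕ, ENNReal.ofReal (a n)⁻¹ * P (Aset X a n) := by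
  rw [ofReal_integral_eq_lintegral_ofReal hint (Eventually.of_forall hX0)]
  exact lintegral_ofReal_eq_tsum_measure_Aset hint.aemeasurable hX0 (fun n => (ha n).le) hvan hdiv

theorem stmt5 {Ω : Type*} [MeasurableSpace Ω] (P : Measure Ω) [IsProbabilityMeasure P]
    (X : Ω → ℝ) (hX0 : ∀ ω, 0 ≤ X ω) (hint : Integrable X P)
    (a : ℕ → ℝ) (ha : ∀ n, 0 < a n)
    (hvan : Tendsto (fun n => (a n)⁻¹) atTop (𝓝 0))
    (hdiv : ¬ Summable (fun n => (a n)⁻¹)) :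
    ENNReal.ofReal (∫ ω, X ω ∂P)
      = ∑' n : ℕ, ENNReal.ofReal (a n)⁻¹ * P (Aset X a n) :=
  stmt5_general P X hX0 hint a ha hvan hdiv
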